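/- Let ℓ ≥ 1, q = 2^ℓ, let r be an integer with 1 ≤ r ≤ q/2, and set s = ⌊log₂ r⌋. Then 4·|S*(ℓ; r)| > r² · |S_0(ℓ − s; 1)|. Moreover, if r is a power of 2 (so that s = log₂ r), then |S*(ℓ; r)| ≥ r² · |S_0(ℓ − s; 1)|. -/

import Mathlib

/-!
Write `s = ⌊log₂ r⌋`, so `2^s ≤ r < 2^(s+1)`. Appending `s` arbitrary low binary digits `x, y`
to a pair `(a, b) ∈ S₀(ℓ − s; 1)` gives a pair `(2^s a + x, 2^s b + y) ∈ S*(ℓ; r)`: shifting the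
witnesses `i, j` left by `s` bits preserves the shadow relations, and the equation holds with
`t = 0` and `r' = 2^s − x ≤ r`. This map is injective, so `|S*(ℓ; r)| ≥ 4^s |S₀(ℓ − s; 1)|`,
and `r² < 4 · 4^s` (with `r² = 4^s` when `r` is a power of two).
-/

/-- `u ≤₂ v`: every binary digit of `u` is at most the corresponding binary digit
of `v` (the 2-shadow relation). -/
def le2 (u v : ℕ) : Prop := ∀ k, u.testBit k = true → v.testBit k = true

/-- The set `S_t(ℓ; r)` of pairs `(a, b)` with `0 ≤ a, b ≤ 2^ℓ − 1` for which there exist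
`i ≤₂ b`, `j ≤₂ (b − i)` and `1 ≤ r' ≤ r` with `2i + j + a = (t+1)·2^ℓ − r'`. -/
def Sset (ℓ r t : ℕ) : Set (ℕ × ℕ) :=
  {p | p.1 ≤ 2 ^ ℓ - 1 ∧ p.2 ≤ 2 ^ ℓ - 1 ∧
    ∃ i j r' : ℕ, le2 i p.2 ∧ le2 j (p.2 - i) ∧ 1 ≤ r' ∧ r' ≤ r ∧
      2 * i + j + p.1 = (t + 1) * 2 ^ ℓ - r'}

/-- The set `S*(ℓ; r)` of pairs `(a, b)` with `0 ≤ a, b ≤ 2^ℓ − 1` for which there exist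
`i ≤₂ b`, `j ≤₂ (b − i)`, `t ≥ 0` and `1 ≤ r' ≤ r` with
`2i + j + a = 2^ℓ − r' + t·(2^ℓ − 1)`. -/
def SstarSet (ℓ r : ℕ) : Set (ℕ × ℕ) :=
  {p | p.1 ≤ 2 ^ ℓ - 1 ∧ p.2 ≤ 2 ^ ℓ - 1 ∧
    ∃ i j t r' : ℕ, le2 i p.2 ∧ le2 j (p.2 - i) ∧ 1 ≤ r' ∧ r' ≤ r ∧
      2 * i + j + p.1 = 2 ^ ℓ - r' + t * (2 ^ ℓ - 1)}

lemma le2_zero (v : ℕ) : le2 0 v := fun k hk => by simp at hk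

lemma le2.two_pow_mul_add {i b y : ℕ} (h : le2 i b) {s : ℕ} (hy : y < 2 ^ s) :
    le2 (2 ^ s * i) (2 ^ s * b + y) := by
  intro k hk
  rw [Nat.testBit_two_pow_mul, Bool.and_eq_true, decide_eq_true_eq] at hk
  rw [Nat.testBit_two_pow_mul_add b hy, if_neg (by omega)]
  exact h _ hk.2

lemma Nat.eq_and_eq_of_mul_add_eq_mul_add {q a a' x x' : ℕ} (hx : x < q) (hx' : x' < q)
    (h : q * a + x = q * a' + x') : a = a' ∧ x = x' := by
  have hq : 0 < q := by omega
  constructor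
  · simpa [Nat.mul_add_div hq, Nat.div_eq_of_lt hx, Nat.div_eq_of_lt hx'] using
      congrArg (· / q) h
  · simpa [Nat.mod_eq_of_lt hx, Nat.mod_eq_of_lt hx'] using congrArg (· % q) h

lemma Sset_finite (ℓ r t : ℕ) : (Sset ℓ r t).Finite :=
  ((Set.finite_Iic _).prod (Set.finite_Iic _)).subset fun _ hp => ⟨hp.1, hp.2.1⟩

lemma SstarSet_finite (ℓ r : ℕ) : (SstarSet ℓ r).Finite :=
  ((Set.finite_Iic _).prod (Set.finite_Iic _)).subset fun _ hp => ⟨hp.1, hp.2.1⟩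

lemma card_Sset_one_zero_pos (ℓ : ℕ) : 0 < Nat.card (Sset ℓ 1 0) := by
  have := (Sset_finite ℓ 1 0).to_subtype
  have hmem : (2 ^ ℓ - 1, 0) ∈ Sset ℓ 1 0 :=
    ⟨le_rfl, Nat.zero_le _, 0, 0, 1, le2_zero _, le2_zero _, le_rfl, le_rfl, by simp⟩
  have : Nonempty (Sset ℓ 1 0) := ⟨⟨_, hmem⟩⟩
  exact Nat.card_pos

lemma two_pow_mul_add_mem_SstarSet {ℓ s r a b x y : ℕ} (hs : s ≤ ℓ) (hr : 2 ^ s ≤ r)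
    (hab : (a, b) ∈ Sset (ℓ - s) 1 0) (hx : x < 2 ^ s) (hy : y < 2 ^ s) :
    (2 ^ s * a + x, 2 ^ s * b + y) ∈ SstarSet ℓ r := by
  obtain ⟨ha, hb, i, j, r', hi, hj, hr'1, hr'2, heq⟩ := hab
  dsimp only at ha hb hi hj heq
  obtain rfl : r' = 1 := by omega
  have hpow : 2 ^ s * 2 ^ (ℓ - s) = 2 ^ ℓ := by rw [← pow_add, Nat.add_sub_cancel' hs]
  have hP : 1 ≤ 2 ^ (ℓ - s) := Nat.one_le_two_pow
  have hle : ∀ c ≤ 2 ^ (ℓ - s) - 1, 2 ^ s * c + 2 ^ s ≤ 2 ^ ℓ := fun c hc => by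
    rw [← hpow, ← Nat.mul_add_one]
    exact Nat.mul_le_mul_left _ (by omega)
  have hsum : 2 ^ s * (2 * i + j + a) + 2 ^ s = 2 ^ ℓ := by
    rw [show 2 * i + j + a = 2 ^ (ℓ - s) - 1 by simpa using heq, ← Nat.mul_add_one,
      Nat.sub_add_cancel hP, hpow]
  have hsub : 2 ^ s * b + y - 2 ^ s * i = 2 ^ s * (b - i) + y := by
    have := Nat.mul_le_mul_left (2 ^ s) (Nat.le_of_testBit hi)
    rw [Nat.mul_sub]
    omega
  refine ⟨by have := hle a ha; omega, by have := hle b hb; omega,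
    2 ^ s * i, 2 ^ s * j, 0, 2 ^ s - x, hi.two_pow_mul_add hy, ?_, by omega, by omega, ?_⟩
  · rw [hsub]
    exact hj.two_pow_mul_add hy
  · have : 2 * (2 ^ s * i) + 2 ^ s * j + (2 ^ s * a + x) = 2 ^ s * (2 * i + j + a) + x := by ring
    omega

lemma two_pow_sq_mul_card_Sset_le_card_SstarSet {ℓ s r : ℕ} (hs : s ≤ ℓ) (hr : 2 ^ s ≤ r) :
    (2 ^ s) ^ 2 * Nat.card (Sset (ℓ - s) 1 0) ≤ Nat.card (SstarSet ℓ r) := by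
  have := (SstarSet_finite ℓ r).to_subtype
  let f : Sset (ℓ - s) 1 0 × Fin (2 ^ s) × Fin (2 ^ s) → SstarSet ℓ r :=
    fun ⟨⟨(a, b), hab⟩, x, y⟩ =>
      ⟨(2 ^ s * a + x, 2 ^ s * b + y), two_pow_mul_add_mem_SstarSet hs hr hab x.2 y.2⟩
  have hf : f.Injective := by
    rintro ⟨⟨⟨a, b⟩, _⟩, x, y⟩ ⟨⟨⟨a', b'⟩, _⟩, x', y'⟩ h
    simp only [f, Subtype.mk.injEq, Prod.mk.injEq] at h
    obtain ⟨rfl, hx⟩ := Nat.eq_and_eq_of_mul_add_eq_mul_add x.2 x'.2 h.1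
    obtain ⟨rfl, hy⟩ := Nat.eq_and_eq_of_mul_add_eq_mul_add y.2 y'.2 h.2
    rw [Fin.ext hx, Fin.ext hy]
  have := Nat.card_le_card_of_injective f hf
  simp only [Nat.card_prod, Nat.card_eq_fintype_card, Fintype.card_prod, Fintype.card_fin] at this
  linarith [sq (2 ^ s)]

theorem stmt_15_general (ℓ r : ℕ) (hr1 : 1 ≤ r) (hr2 : 2 * r ≤ 2 ^ ℓ) :
    r ^ 2 * Nat.card ↥(Sset (ℓ - Nat.log 2 r) 1 0) < 4 * Nat.card ↥(SstarSet ℓ r) ∧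
      ((∃ m : ℕ, r = 2 ^ m) →
        r ^ 2 * Nat.card ↥(Sset (ℓ - Nat.log 2 r) 1 0) ≤ Nat.card ↥(SstarSet ℓ r)) := by
  obtain ⟨s, hs_def⟩ : ∃ s, Nat.log 2 r = s := ⟨_, rfl⟩
  have hsr : 2 ^ s ≤ r := hs_def ▸ Nat.pow_log_le_self 2 (by omega)
  have hrs : r < 2 * 2 ^ s := by
    simpa [hs_def, pow_succ'] using Nat.lt_pow_succ_log_self one_lt_two r
  have hsℓ : s ≤ ℓ := hs_def ▸ (Nat.log_lt_of_lt_pow (by omega) (by omega)).le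
  have hembed := two_pow_sq_mul_card_Sset_le_card_SstarSet hsℓ hsr
  have hpos := card_Sset_one_zero_pos (ℓ - s)
  rw [hs_def]
  refine ⟨?_, ?_⟩
  · calc r ^ 2 * Nat.card (Sset (ℓ - s) 1 0)
        < (2 * 2 ^ s) ^ 2 * Nat.card (Sset (ℓ - s) 1 0) := by gcongr
      _ = 4 * ((2 ^ s) ^ 2 * Nat.card (Sset (ℓ - s) 1 0)) := by ring
      _ ≤ 4 * Nat.card (SstarSet ℓ r) := by gcongr
  · rintro ⟨m, rfl⟩
    rw [Nat.log_pow one_lt_two] at hs_def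
    subst hs_def
    exact hembed

/-- With `s = ⌊log₂ r⌋`, `4·|S*(ℓ; r)| > r²·|S₀(ℓ−s; 1)|`; and if `r`
is a power of two then `|S*(ℓ; r)| ≥ r²·|S₀(ℓ−s; 1)|`. -/
theorem stmt_15 (ℓ r : ℕ) (hℓ : 1 ≤ ℓ) (hr1 : 1 ≤ r) (hr2 : 2 * r ≤ 2 ^ ℓ) :
    r ^ 2 * Nat.card ↥(Sset (ℓ - Nat.log 2 r) 1 0) < 4 * Nat.card ↥(SstarSet ℓ r) ∧
      ((∃ m : ℕ, r = 2 ^ m) →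
        r ^ 2 * Nat.card ↥(Sset (ℓ - Nat.log 2 r) 1 0) ≤ Nat.card ↥(SstarSet ℓ r)) :=
  stmt_15_general ℓ r hr1 hr2
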